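/- arXiv:1104.5080 — 2 statements merged into one kernel-verified Lean document; each statement's English description precedes it below -/
import Mathlib

section
/- If λ ∈ Γ_k with the coordinates arranged so that λ_1 ≤ λ_2 ≤ ⋯ ≤ λ_n, then σ_{k−1}(λ|1) ≥ σ_{k−1}(λ|i) for every i, i.e. the derivative of σ_k in the direction of the smallest entry is the largest. -/
/-- The `k`-th elementary symmetric polynomial of `lam : Fin n → ℝ`. -/
noncomputable def esymm (n k : ℕ) (lam : Fin n → ℝ) : ℝ :=
  ∑ s ∈ Finset.univ.powersetCard k, ∏ i ∈ s, lam i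

/-- The Gårding cone `Γ_k ⊆ ℝⁿ`. -/
def Gamma (n k : ℕ) : Set (Fin n → ℝ) :=
  {lam | ∀ l : ℕ, 1 ≤ l → l ≤ k → 0 < esymm n l lam}

/-- `σ_j(λ|i)`: the `j`-th elementary symmetric polynomial of `λ` with the
`i`-th coordinate deleted. -/
noncomputable def esymmDel (n j : ℕ) (i : Fin n) (lam : Fin n → ℝ) : ℝ :=
  ∑ s ∈ (Finset.univ.erase i).powersetCard j, ∏ m ∈ s, lam m

/-!
Since `σ_{k-1}(λ|i) - σ_{k-1}(λ|1) = (λ_i - λ_1) σ_{k-2}(λ|1i)`, it suffices that deleting a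
coordinate maps `Γ_k` into `Γ_{k-1}`. By `σ_l(λ) = σ_l(λ|j) + λ_j σ_{l-1}(λ|j)`, deleting a
nonpositive coordinate even preserves `Γ_k`; a positive coordinate is handled by first deleting a
nonpositive one (induction on the number of coordinates) and then invoking Newton's inequality
`σ_{l+1} σ_{l-1} ≤ σ_l²`. Newton's inequality is proved by the classical Rolle argument:
differentiating `∏ (X - λ_j)` keeps all roots real and preserves the normalised means
`σ_l / C(N, l)`, which reduces it to the case of `l + 1` numbers.
-/

open Polynomial

namespace Multiset

theorem esymm_zero {R : Type*} [CommSemiring R] (s : Multiset R) : s.esymm 0 = 1 := by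
  simp [esymm, powersetCard_zero_left]

theorem esymm_cons {R : Type*} [CommSemiring R] (x : R) (s : Multiset R) (l : ℕ) :
    (x ::ₘ s).esymm (l + 1) = s.esymm (l + 1) + x * s.esymm l := by
  simp only [esymm, powersetCard_cons, map_add, sum_add, map_map, Function.comp_def, prod_cons,
    sum_map_mul_left]

theorem esymm_eq_zero_of_card_lt {R : Type*} [CommSemiring R] {s : Multiset R} {l : ℕ}
    (h : card s < l) : s.esymm l = 0 := by
  simp [esymm, powersetCard_eq_empty _ h]

theorem card_roots_derivative_prod_X_sub_C (s : Multiset ℝ) :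
    card (derivative (s.map (X - C ·)).prod).roots = card s - 1 ∧
    (derivative (s.map (X - C ·)).prod).natDegree = card s - 1 := by
  set p := (s.map (X - C ·)).prod
  have hp : p.natDegree = card s := natDegree_multiset_prod_X_sub_C_eq_card s
  have h1 := card_roots_le_derivative p
  have h2 := (derivative p).card_roots'
  have h3 := natDegree_derivative_le p
  rw [roots_multiset_prod_X_sub_C] at h1
  omega

/-- Vieta's formulas for `∏ (X - r)` and for its derivative, whose roots are all real by Rolle. -/
theorem esymm_roots_derivative_prod_X_sub_C (s : Multiset ℝ) {N t : ℕ} (hs : card s = N + 1)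
    (ht : t ≤ N) :
    ((N : ℝ) + 1) * (derivative (s.map (X - C ·)).prod).roots.esymm t =
      ((N : ℝ) + 1 - t) * s.esymm t := by
  set p := (s.map (X - C ·)).prod
  obtain ⟨hcard, hdeg⟩ := card_roots_derivative_prod_X_sub_C s
  rw [hs, Nat.add_sub_cancel] at hcard hdeg
  have hp_coeff (j : ℕ) (hj : j ≤ N + 1) : p.coeff (N + 1 - j) = (-1) ^ j * s.esymm j := by
    rw [prod_X_sub_C_coeff s (by omega), hs, Nat.sub_sub_self hj]
  have hq_coeff (j : ℕ) (hj : j ≤ N) :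
      (derivative p).coeff (N - j) = (-1) ^ j * s.esymm j * ((N : ℝ) + 1 - j) := by
    rw [coeff_derivative, show N - j + 1 = N + 1 - j by omega, hp_coeff j (by omega),
      Nat.cast_sub hj]
    ring
  have hlead : (derivative p).leadingCoeff = (N : ℝ) + 1 := by
    rw [leadingCoeff, hdeg, ← Nat.sub_zero N, hq_coeff 0 (Nat.zero_le _)]
    simp [esymm_zero]
  have hvieta := coeff_eq_esymm_roots_of_card (hcard.trans hdeg.symm) (k := N - t) (by omega)
  rw [hq_coeff t ht, hlead, hdeg, Nat.sub_sub_self ht] at hvieta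
  refine mul_left_cancel₀ (pow_ne_zero t (by norm_num : (-1 : ℝ) ≠ 0)) ?_
  linear_combination -hvieta

theorem newton_card_eq_add_two (a : ℕ) (s : Multiset ℝ) (hs : card s = a + 2) :
    2 * ((a : ℝ) + 2) * (s.esymm (a + 2) * s.esymm a) ≤ ((a : ℝ) + 1) * s.esymm (a + 1) ^ 2 := by
  induction a generalizing s with
  | zero =>
    obtain ⟨x, y, rfl⟩ := card_eq_two.mp hs
    have h0 : ({y} : Multiset ℝ).esymm 2 = 0 := esymm_eq_zero_of_card_lt (by simp)
    have h1 : ({y} : Multiset ℝ).esymm 1 = y := by simp [esymm, powersetCard_one]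
    simp only [insert_eq_cons, esymm_cons, esymm_zero, h0, h1, Nat.cast_zero]
    nlinarith [sq_nonneg (x - y)]
  | succ a ih =>
    obtain ⟨x, t, rfl, ht⟩ := card_eq_succ_iff.mp hs
    have htop : t.esymm (a + 3) = 0 := esymm_eq_zero_of_card_lt (by omega)
    rw [esymm_cons x t (a + 2), esymm_cons x t (a + 1), esymm_cons x t a, htop]
    have hx : 0 ≤ ((a : ℝ) + 3) * x ^ 2 := by positivity
    push_cast
    nlinarith [mul_le_mul_of_nonneg_left (ih t ht) hx,
      sq_nonneg (((a : ℝ) + 2) * t.esymm (a + 2) - x * t.esymm (a + 1))]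

/-- Newton's inequality `(e_{a+1} / C(N,a+1))² ≥ (e_a / C(N,a)) (e_{a+2} / C(N,a+2))`, `N = a+d+2`,
with the binomial coefficients cleared. -/
theorem newton (a d : ℕ) (s : Multiset ℝ) (hs : card s = a + d + 2) :
    ((a : ℝ) + 2) * ((d : ℝ) + 2) * (s.esymm (a + 2) * s.esymm a) ≤
      ((a : ℝ) + 1) * ((d : ℝ) + 1) * s.esymm (a + 1) ^ 2 := by
  induction d generalizing s with
  | zero =>
    have := newton_card_eq_add_two a s hs
    push_cast
    linarith
  | succ d ih =>
    set Q := (derivative (s.map (X - C ·)).prod).roots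
    have hQ : card Q = a + d + 2 := by
      rw [(card_roots_derivative_prod_X_sub_C s).1, hs]; rfl
    have hs' : card s = (a + d + 2) + 1 := by rw [hs]; ring
    set M : ℝ := a + d + 3
    have vieta (t : ℕ) (ht : t ≤ a + 2) : M * Q.esymm t = (M - t) * s.esymm t := by
      have := esymm_roots_derivative_prod_X_sub_C s hs' (t := t) (by omega)
      push_cast at this
      linear_combination this
    have e0 : M * Q.esymm a = ((d : ℝ) + 3) * s.esymm a := by
      rw [vieta a (by omega)]; ring
    have e1 : M * Q.esymm (a + 1) = ((d : ℝ) + 2) * s.esymm (a + 1) := by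
      rw [vieta (a + 1) (by omega)]; push_cast; ring
    have e2 : M * Q.esymm (a + 2) = ((d : ℝ) + 1) * s.esymm (a + 2) := by
      rw [vieta (a + 2) le_rfl]; push_cast; ring
    have hd : (0 : ℝ) < ((d : ℝ) + 1) * ((d : ℝ) + 2) := by positivity
    refine le_of_mul_le_mul_left ?_ hd
    push_cast
    calc ((d : ℝ) + 1) * (d + 2) * ((a + 2) * (d + 1 + 2) * (s.esymm (a + 2) * s.esymm a))
        = (a + 2) * (d + 2) * (((d + 1) * s.esymm (a + 2)) * ((d + 3) * s.esymm a)) := by ring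
      _ = M ^ 2 * ((a + 2) * (d + 2) * (Q.esymm (a + 2) * Q.esymm a)) := by
        rw [← e0, ← e2]; ring
      _ ≤ M ^ 2 * ((a + 1) * (d + 1) * Q.esymm (a + 1) ^ 2) :=
        mul_le_mul_of_nonneg_left (ih Q hQ) (sq_nonneg M)
      _ = (a + 1) * (d + 1) * (M * Q.esymm (a + 1)) ^ 2 := by ring
      _ = ((d : ℝ) + 1) * (d + 2) * ((a + 1) * (d + 1 + 1) * s.esymm (a + 1) ^ 2) := by
        rw [e1]; ring

theorem esymm_mul_esymm_le_sq (s : Multiset ℝ) (a : ℕ) :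
    s.esymm (a + 2) * s.esymm a ≤ s.esymm (a + 1) ^ 2 := by
  by_cases hs : card s < a + 2
  · rw [esymm_eq_zero_of_card_lt hs, zero_mul]
    positivity
  obtain ⟨d, hd⟩ : ∃ d, card s = a + d + 2 := ⟨card s - (a + 2), by omega⟩
  have hcoef : ((a : ℝ) + 1) * ((d : ℝ) + 1) ≤ ((a : ℝ) + 2) * ((d : ℝ) + 2) := by gcongr <;> norm_num
  refine le_of_mul_le_mul_left ?_ (by positivity : (0 : ℝ) < ((a : ℝ) + 2) * ((d : ℝ) + 2))
  exact (newton a d s hd).trans (mul_le_mul_of_nonneg_right hcoef (sq_nonneg _))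

theorem esymm_nonneg {s : Multiset ℝ} (hs : ∀ x ∈ s, 0 ≤ x) (l : ℕ) : 0 ≤ s.esymm l :=
  sum_nonneg fun _ ht ↦ by
    obtain ⟨u, hu, rfl⟩ := mem_map.mp ht
    exact prod_nonneg fun x hx ↦ hs x (mem_of_le (mem_powersetCard.mp hu).1 hx)

theorem esymm_pos {s : Multiset ℝ} (hs : ∀ x ∈ s, 0 < x) {l : ℕ} (hl : l ≤ card s) :
    0 < s.esymm l := by
  induction s using Multiset.induction generalizing l with
  | empty => simp_all [esymm_zero]
  | cons x t ih =>
    rcases l with _ | l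
    · simp [esymm_zero]
    rw [esymm_cons]
    have ht : ∀ y ∈ t, 0 < y := fun y hy ↦ hs y (mem_cons_of_mem hy)
    have := esymm_nonneg (fun y hy ↦ (ht y hy).le) (l + 1)
    have := mul_pos (hs x (mem_cons_self x t)) (ih ht (l := l) (by simpa using hl))
    linarith

/-- `s ∈ Γ_k`: the Gårding cone, read on the multiset of coordinates. -/
def InGardingCone (s : Multiset ℝ) (k : ℕ) : Prop :=
  ∀ l ≤ k, 0 < s.esymm l

namespace InGardingCone

variable {s t : Multiset ℝ} {k : ℕ} {x y : ℝ}

theorem mono (h : InGardingCone s k) {k' : ℕ} (hk : k' ≤ k) : InGardingCone s k' :=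
  fun l hl ↦ h l (hl.trans hk)

theorem le_card (h : InGardingCone s k) : k ≤ card s := by
  by_contra! hk
  exact (h k le_rfl).ne' (esymm_eq_zero_of_card_lt hk)

theorem of_cons_of_nonpos (h : InGardingCone (x ::ₘ s) k) (hx : x ≤ 0) : InGardingCone s k := by
  intro l hl
  induction l with
  | zero => simp [esymm_zero]
  | succ l ih =>
    have := h (l + 1) hl
    rw [esymm_cons] at this
    nlinarith [ih (by omega)]

/-- Newton's inequality makes `e_{j+1}(t) / e_j(t)` nonincreasing, so once
`e_j(y :: t) = e_j(t) + y e_{j-1}(t)` fails to be positive it stays nonpositive at `j + 1`, and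
then `e_{j+1}(x :: y :: t) = e_{j+1}(y :: t) + x e_j(y :: t) ≤ 0`. -/
theorem cons_of_cons_cons (ht : InGardingCone t k) (hx : 0 ≤ x)
    (h : InGardingCone (x ::ₘ y ::ₘ t) (k + 1)) : InGardingCone (y ::ₘ t) k := by
  intro l hl
  rcases l with _ | j
  · simp [esymm_zero]
  by_contra! hj
  have hg₀ := ht j (by omega)
  have hg₁ := ht (j + 1) hl
  rw [esymm_cons] at hj
  have hnext : (y ::ₘ t).esymm (j + 2) ≤ 0 := by
    rw [esymm_cons]
    by_contra! hpos
    nlinarith [esymm_mul_esymm_le_sq t j, mul_le_mul_of_nonneg_left hj hg₁.le, mul_pos hpos hg₀]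
  have := h (j + 2) (by omega)
  rw [esymm_cons x _ (j + 1), esymm_cons y t j] at this
  nlinarith [mul_nonpos_of_nonneg_of_nonpos hx hj]

theorem of_cons (h : InGardingCone (x ::ₘ s) (k + 1)) : InGardingCone s k := by
  induction s using Multiset.strongInductionOn generalizing x with
  | ih s ih =>
  by_cases hx : x ≤ 0
  · exact (h.of_cons_of_nonpos hx).mono k.le_succ
  by_cases hpos : ∀ y ∈ s, 0 < y
  · have hk := h.le_card
    rw [card_cons] at hk
    exact fun l hl ↦ esymm_pos hpos (by omega)
  obtain ⟨y, hy, hy0⟩ : ∃ y ∈ s, y ≤ 0 := by simpa using hpos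
  obtain ⟨t, rfl⟩ := exists_cons_of_mem hy
  have hxt : InGardingCone (x ::ₘ t) (k + 1) := by
    rw [cons_swap] at h
    exact h.of_cons_of_nonpos hy0
  exact (ih t (lt_cons_self t y) hxt).cons_of_cons_cons (not_le.mp hx).le h

end InGardingCone

theorem esymm_cons_le_esymm_cons {s : Multiset ℝ} {x y : ℝ} {k : ℕ} (hxy : x ≤ y)
    (h : InGardingCone (x ::ₘ y ::ₘ s) (k + 1)) : (x ::ₘ s).esymm k ≤ (y ::ₘ s).esymm k := by
  rcases k with _ | j
  · simp [esymm_zero]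
  have hs : 0 < s.esymm j := h.of_cons.of_cons j le_rfl
  rw [esymm_cons, esymm_cons]
  gcongr

end Multiset

theorem Finset.map_val_eq_cons_map_val_erase {ι α : Type*} [DecidableEq ι] (f : ι → α)
    {A : Finset ι} {a : ι} (ha : a ∈ A) : A.val.map f = f a ::ₘ (A.erase a).val.map f := by
  rw [Finset.erase_val, ← Multiset.map_cons, Multiset.cons_erase (Finset.mem_val.mpr ha)]

theorem esymmDel_eq_esymm_map (n j : ℕ) (i : Fin n) (lam : Fin n → ℝ) :
    esymmDel n j i lam = ((Finset.univ.erase i).val.map lam).esymm j :=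
  (Finset.esymm_map_val lam _ j).symm

theorem inGardingCone_of_mem_Gamma {n k : ℕ} {lam : Fin n → ℝ} (hlam : lam ∈ Gamma n k) :
    (Finset.univ.val.map lam).InGardingCone k := by
  rintro (_ | l) hl
  · simp [Multiset.esymm_zero]
  · rw [Finset.esymm_map_val]
    exact hlam (l + 1) l.succ_pos hl

theorem stmt_7_general (n k : ℕ) (hn : 0 < n) (hk : 1 ≤ k)
    (lam : Fin n → ℝ) (hlam : lam ∈ Gamma n k)
    (hmono : ∀ i j : Fin n, i ≤ j → lam i ≤ lam j) (i : Fin n) :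
    esymmDel n (k - 1) i lam ≤ esymmDel n (k - 1) ⟨0, hn⟩ lam := by
  set z : Fin n := ⟨0, hn⟩
  obtain rfl | hiz := eq_or_ne i z
  · exact le_rfl
  have hi : i ∈ Finset.univ.erase z := Finset.mem_erase.mpr ⟨hiz, Finset.mem_univ i⟩
  have hz : z ∈ Finset.univ.erase i := Finset.mem_erase.mpr ⟨hiz.symm, Finset.mem_univ z⟩
  set m := ((Finset.univ.erase z).erase i).val.map lam
  have hcone : (lam z ::ₘ lam i ::ₘ m).InGardingCone (k - 1 + 1) := by
    rw [Nat.sub_add_cancel hk, ← Finset.map_val_eq_cons_map_val_erase lam hi,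
      ← Finset.map_val_eq_cons_map_val_erase lam (Finset.mem_univ z)]
    exact inGardingCone_of_mem_Gamma hlam
  rw [esymmDel_eq_esymm_map, esymmDel_eq_esymm_map, Finset.map_val_eq_cons_map_val_erase lam hz,
    Finset.map_val_eq_cons_map_val_erase lam hi, Finset.erase_right_comm]
  exact Multiset.esymm_cons_le_esymm_cons (hmono z i (Nat.zero_le _)) hcone

/-- If `λ ∈ Γ_k` with `λ_1 ≤ ⋯ ≤ λ_n`, then `σ_{k-1}(λ|1) ≥ σ_{k-1}(λ|i)` for all `i`. -/
theorem stmt_7 (n k : ℕ) (hn : 0 < n) (hk : 1 ≤ k) (hkn : k ≤ n)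
    (lam : Fin n → ℝ) (hlam : lam ∈ Gamma n k)
    (hmono : ∀ i j : Fin n, i ≤ j → lam i ≤ lam j) (i : Fin n) :
    esymmDel n (k - 1) i lam ≤ esymmDel n (k - 1) ⟨0, hn⟩ lam :=
  stmt_7_general n k hn hk lam hlam hmono i
end

section
/- (Newton's inequality) For all λ ∈ ℝⁿ and 1 ≤ k ≤ n−1, σ_k(λ)² ≥ σ_{k−1}(λ) σ_{k+1}(λ) · (k(n−k+1))⁻¹ · (k+1)(n−k); more precisely, (σ_k/C(n,k))² ≥ (σ_{k−1}/C(n,k−1)) · (σ_{k+1}/C(n,k+1)). -/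
/-!
Newton's inequality holds for every real-rooted polynomial `p` of degree at most `N` once its
coefficients are divided by binomial coefficients (`normCoeff N p`). Real-rootedness survives
differentiation (Rolle) and reversal of the coefficients; differentiation shifts the normalised
coefficients down by one up to a positive factor, and reversal reads them backwards. So
differentiating `k` times, reversing, and differentiating again carries three consecutive
normalised coefficients of `p` to those of a real-rooted quadratic `c + 2 b X + a X²`, where
`a c ≤ b²` is the nonnegativity of its discriminant. For `p = ∏ (X + λᵢ)` the normalised
coefficients are the `σ_j(λ) / C(n, j)`. The unnormalised form follows because
`C(n,k)² / (C(n,k-1) C(n,k+1)) = (k+1)(n-k+1) / (k(n-k))` dominates its constant.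
-/

namespace Polynomial

theorem Splits.derivative {p : ℝ[X]} (hp : p.Splits) : p.derivative.Splits := by
  rw [splits_iff_card_roots] at hp ⊢
  have h₁ := card_roots_le_derivative p
  have h₂ := natDegree_derivative_le p
  have h₃ := card_roots' (Polynomial.derivative p)
  omega

theorem Splits.iterate_derivative {p : ℝ[X]} (hp : p.Splits) (k : ℕ) :
    (Polynomial.derivative^[k] p).Splits := by
  induction k with
  | zero => exact hp
  | succ k ih => rw [Function.iterate_succ_apply']; exact ih.derivative

theorem Splits.reverse {K : Type*} [Field K] {p : K[X]} (hp : p.Splits) : p.reverse.Splits := by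
  induction hp using Submonoid.closure_induction with
  | mem f hf =>
    rcases hf with ⟨a, rfl⟩ | ⟨a, rfl⟩
    · simp
    · exact .of_natDegree_le_one ((reverse_natDegree_le _).trans (natDegree_X_add_C a).le)
  | one => rw [← C_1, reverse_C]; exact Splits.C 1
  | mul f g _ _ hf hg => rw [reverse_mul_of_domain]; exact hf.mul hg

theorem reflect_eq_reverse_mul_X_pow {R : Type*} [Semiring R] {p : R[X]} {N : ℕ}
    (hN : p.natDegree ≤ N) : reflect N p = p.reverse * X ^ (N - p.natDegree) := by
  have h := reflect_mul p 1 le_rfl (by simp : (1 : R[X]).natDegree ≤ N - p.natDegree)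
  rwa [mul_one, Nat.add_sub_cancel' hN, reflect_one] at h

theorem Splits.reflect {K : Type*} [Field K] {p : K[X]} (hp : p.Splits) {N : ℕ}
    (hN : p.natDegree ≤ N) : (reflect N p).Splits := by
  rw [reflect_eq_reverse_mul_X_pow hN]
  exact hp.reverse.mul (Splits.X_pow _)

/-- For `p = ∏ (X + λᵢ)` of degree `N`, `normCoeff N p j = σ_{N-j}(λ) / C(N, N-j)`. -/
noncomputable def normCoeff (N : ℕ) (p : ℝ[X]) (j : ℕ) : ℝ := p.coeff j / N.choose j

def NewtonIneqAt (N : ℕ) (p : ℝ[X]) (k : ℕ) : Prop :=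
  normCoeff N p k * normCoeff N p (k + 2) ≤ normCoeff N p (k + 1) ^ 2

theorem normCoeff_iterate_derivative (p : ℝ[X]) {N m j : ℕ} (h : j + m ≤ N) :
    normCoeff (N - m) (derivative^[m] p) j = N.descFactorial m * normCoeff N p (j + m) := by
  have hchoose :
      (j + m).descFactorial m * N.choose (j + m) = N.descFactorial m * (N - m).choose j := by
    rw [Nat.descFactorial_eq_factorial_mul_choose, Nat.descFactorial_eq_factorial_mul_choose,
      mul_assoc, mul_assoc, mul_comm ((j + m).choose m), Nat.choose_mul (n := N) (by omega),
      Nat.add_sub_cancel]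
  have h₁ : (0 : ℝ) < N.choose (j + m) := by exact_mod_cast Nat.choose_pos h
  have h₂ : (0 : ℝ) < (N - m).choose j := by exact_mod_cast Nat.choose_pos (by omega)
  unfold normCoeff
  rw [coeff_iterate_derivative, nsmul_eq_mul, mul_div_assoc', div_eq_div_iff h₂.ne' h₁.ne']
  have hchoose' : ((j + m).descFactorial m : ℝ) * N.choose (j + m) =
      N.descFactorial m * (N - m).choose j := by exact_mod_cast hchoose
  linear_combination p.coeff (j + m) * hchoose'

theorem normCoeff_reflect (p : ℝ[X]) {N j : ℕ} (hj : j ≤ N) :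
    normCoeff N (reflect N p) j = normCoeff N p (N - j) := by
  rw [normCoeff, normCoeff, coeff_reflect, revAt_le hj, Nat.choose_symm hj]

theorem NewtonIneqAt.of_iterate_derivative {p : ℝ[X]} {N k : ℕ} (hk : k + 2 ≤ N)
    (h : NewtonIneqAt (N - k) (derivative^[k] p) 0) : NewtonIneqAt N p k := by
  unfold NewtonIneqAt at h ⊢
  rw [normCoeff_iterate_derivative p (j := 0) (by omega),
    normCoeff_iterate_derivative p (j := 1) (by omega),
    normCoeff_iterate_derivative p (j := 2) (by omega), zero_add, add_comm 1, add_comm 2] at h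
  have hD : (0 : ℝ) < N.descFactorial k ^ 2 := by
    have := Nat.descFactorial_pos.mpr (by omega : k ≤ N)
    positivity
  exact le_of_mul_le_mul_left (by linarith) hD

theorem NewtonIneqAt.reflect {p : ℝ[X]} {N k : ℕ} (hk : k + 2 ≤ N)
    (h : NewtonIneqAt N p (N - (k + 2))) : NewtonIneqAt N (reflect N p) k := by
  unfold NewtonIneqAt at h ⊢
  rw [normCoeff_reflect p (j := k) (by omega), normCoeff_reflect p (j := k + 1) (by omega),
    normCoeff_reflect p hk]
  rw [show N - (k + 2) + 1 = N - (k + 1) by omega, show N - (k + 2) + 2 = N - k by omega] at h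
  linarith

theorem newtonIneqAt_zero_of_natDegree_le_two {p : ℝ[X]} (hp : p.Splits) (h2 : p.natDegree ≤ 2) :
    NewtonIneqAt 2 p 0 := by
  simp only [NewtonIneqAt, normCoeff, Nat.choose_zero_right, Nat.choose_self, Nat.cast_one, div_one,
    show Nat.choose 2 1 = 2 from rfl, Nat.cast_ofNat]
  rcases eq_or_ne (p.coeff 2) 0 with hc | hc
  · rw [hc, mul_zero]; positivity
  obtain ⟨x, hx⟩ := hp.exists_eval_eq_zero (by
    rw [degree_eq_natDegree (by rintro rfl; simp at hc),
      natDegree_eq_of_le_of_coeff_ne_zero h2 hc]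
    decide)
  rw [eval_eq_sum_range' (by omega : p.natDegree < 3)] at hx
  simp only [Finset.sum_range_succ, Finset.sum_range_zero, pow_zero, pow_one, mul_one,
    zero_add] at hx
  have hdiscr : (p.coeff 1 / 2) ^ 2 - p.coeff 0 * p.coeff 2 =
      (2 * p.coeff 2 * x + p.coeff 1) ^ 2 / 4 := by linear_combination (-p.coeff 2) * hx
  have : 0 ≤ (2 * p.coeff 2 * x + p.coeff 1) ^ 2 / 4 := by positivity
  linarith

theorem newtonIneqAt_of_splits {p : ℝ[X]} (hp : p.Splits) {N k : ℕ} (hN : p.natDegree ≤ N)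
    (hk : k + 2 ≤ N) : NewtonIneqAt N p k := by
  set M := N - k
  set q := derivative^[k] p
  have hq : q.natDegree ≤ M := (natDegree_iterate_derivative p k).trans (by omega)
  have hr : (reflect M q).natDegree ≤ M := natDegree_reflect_le.trans (max_le le_rfl hq)
  refine NewtonIneqAt.of_iterate_derivative hk ?_
  have hquad : NewtonIneqAt (M - (M - 2)) (derivative^[M - 2] (reflect M q)) 0 := by
    rw [show M - (M - 2) = 2 by omega]
    exact newtonIneqAt_zero_of_natDegree_le_two
      (((hp.iterate_derivative k).reflect hq).iterate_derivative _)
      ((natDegree_iterate_derivative _ _).trans (by omega))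
  simpa using (hquad.of_iterate_derivative (by omega)).reflect (by omega)

end Polynomial

open Polynomial

theorem normCoeff_prod_X_add_C {n j : ℕ} (lam : Fin n → ℝ) (hj : j ≤ n) :
    normCoeff n (∏ i, (X + C (lam i))) (n - j) = esymm n j lam / n.choose j := by
  rw [normCoeff, Finset.prod_X_add_C_coeff _ _ (by simp), Finset.card_univ, Fintype.card_fin,
    Nat.sub_sub_self hj, Nat.choose_symm hj]
  rfl

theorem esymm_div_choose_mul_le_sq {n k : ℕ} (hk : 1 ≤ k) (hkn : k + 1 ≤ n) (lam : Fin n → ℝ) :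
    esymm n (k - 1) lam / n.choose (k - 1) * (esymm n (k + 1) lam / n.choose (k + 1)) ≤
      (esymm n k lam / n.choose k) ^ 2 := by
  have hp : (∏ i, (X + C (lam i))).Splits := Splits.prod fun i _ => Splits.X_add_C (lam i)
  have hdeg : (∏ i, (X + C (lam i))).natDegree ≤ n :=
    (natDegree_prod_le _ _).trans (by simp)
  have h := newtonIneqAt_of_splits hp hdeg (k := n - (k + 1)) (by omega)
  rw [NewtonIneqAt, show n - (k + 1) + 1 = n - k by omega,
    show n - (k + 1) + 2 = n - (k - 1) by omega, normCoeff_prod_X_add_C lam hkn,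
    normCoeff_prod_X_add_C lam (by omega), normCoeff_prod_X_add_C lam (by omega)] at h
  linarith

theorem le_choose_sq_div_choose_mul_choose {n k : ℕ} (hk : 1 ≤ k) (hkn : k + 1 ≤ n) :
    ((k * (n - k + 1) : ℕ) : ℝ)⁻¹ * (((k + 1) * (n - k) : ℕ) : ℝ) ≤
      (n.choose k : ℝ) ^ 2 / (n.choose (k - 1) * n.choose (k + 1)) := by
  obtain ⟨j, rfl⟩ : ∃ j, k = j + 1 := ⟨k - 1, by omega⟩
  set A : ℝ := (n.choose j : ℝ)
  set B : ℝ := (n.choose (j + 1) : ℝ)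
  set C : ℝ := (n.choose (j + 2) : ℝ)
  set m : ℝ := ((n - (j + 1) : ℕ) : ℝ)
  have hA : 0 < A := by simp only [A]; exact_mod_cast Nat.choose_pos (by omega)
  have hB : 0 < B := by simp only [B]; exact_mod_cast Nat.choose_pos (by omega)
  have hC : 0 < C := by simp only [C]; exact_mod_cast Nat.choose_pos (by omega)
  have hm : 0 ≤ m := Nat.cast_nonneg _
  have hAB : B * (j + 1) = A * (m + 1) := by
    have h := Nat.choose_succ_right_eq n j
    rw [show n - j = n - (j + 1) + 1 by omega] at h
    simp only [A, B, m]
    exact_mod_cast h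
  have hBC : C * (j + 2) = B * m := by
    simp only [B, C, m]
    exact_mod_cast Nat.choose_succ_right_eq n (j + 1)
  simp only [Nat.add_sub_cancel]
  push_cast
  rw [inv_mul_eq_div, div_le_div_iff₀ (by positivity) (by positivity)]
  calc (j + 1 + 1) * m * (A * C) = A * B * m ^ 2 := by linear_combination (A * m) * hBC
    _ ≤ A * B * (m + 1) ^ 2 := by gcongr; linarith
    _ = B ^ 2 * ((j + 1) * (m + 1)) := by linear_combination (-(B * (m + 1))) * hAB

/-- Newton's inequality. -/
theorem stmt_9 (n k : ℕ) (hk : 1 ≤ k) (hkn : k ≤ n - 1) (lam : Fin n → ℝ) :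
    esymm n k lam ^ 2 ≥
      esymm n (k - 1) lam * esymm n (k + 1) lam *
        (((k * (n - k + 1) : ℕ) : ℝ)⁻¹ * (((k + 1) * (n - k) : ℕ) : ℝ)) ∧
    (esymm n k lam / (n.choose k : ℝ)) ^ 2 ≥
      (esymm n (k - 1) lam / (n.choose (k - 1) : ℝ)) *
        (esymm n (k + 1) lam / (n.choose (k + 1) : ℝ)) := by
  have hkn' : k + 1 ≤ n := by omega
  have hnewton := esymm_div_choose_mul_le_sq hk hkn' lam
  refine ⟨?_, hnewton⟩
  set a := esymm n (k - 1) lam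
  set b := esymm n k lam
  set c := esymm n (k + 1) lam
  have hA : (0 : ℝ) < n.choose (k - 1) := by exact_mod_cast Nat.choose_pos (by omega)
  have hB : (0 : ℝ) < n.choose k := by exact_mod_cast Nat.choose_pos (by omega)
  have hC : (0 : ℝ) < n.choose (k + 1) := by exact_mod_cast Nat.choose_pos hkn'
  have hsq : a * c * ((n.choose k : ℝ) ^ 2 / (n.choose (k - 1) * n.choose (k + 1))) ≤ b ^ 2 :=
    calc _ = a / n.choose (k - 1) * (c / n.choose (k + 1)) * (n.choose k : ℝ) ^ 2 := by
          field_simp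
      _ ≤ (b / n.choose k) ^ 2 * (n.choose k : ℝ) ^ 2 := by gcongr
      _ = b ^ 2 := by field_simp
  rcases le_or_gt (a * c) 0 with hac | hac
  · have : 0 ≤ ((k * (n - k + 1) : ℕ) : ℝ)⁻¹ * (((k + 1) * (n - k) : ℕ) : ℝ) := by positivity
    nlinarith [sq_nonneg b]
  · exact (mul_le_mul_of_nonneg_left (le_choose_sq_div_choose_mul_choose hk hkn') hac.le).trans hsq
end
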